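/- arXiv:0912.1502 — 2 statements merged into one kernel-verified Lean document; each statement's English description precedes it below -/
import Mathlib

section
/- Let K be a field, K[X] = K[x_1,…,x_n], L ⊆ T^n an order ideal, and I ⊆ K[X] a zero-dimensional ideal. Let Ĩ ⊆ ⟨L⟩_K be a K-subspace with Ĩ^+ ∩ ⟨L⟩_K = Ĩ and such that the ideal generated by Ĩ equals I. If O is an order ideal such that ⟨L⟩_K = Ĩ ⊕ ⟨O⟩_K as K-vector spaces and ∂O ⊆ L, then O supports a border basis of I, i.e., K[X] = I ⊕ ⟨O⟩_K as K-vector spaces. -/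
open MvPolynomial

/-- An order ideal: a finite set of monomials (represented by their exponent
vectors) closed under divisibility (`t' ∣ t` corresponds to `t' ≤ t`). -/
def IsOrderIdeal {n : ℕ} (O : Finset (Fin n →₀ ℕ)) : Prop :=
  ∀ t ∈ O, ∀ t' : Fin n →₀ ℕ, t' ≤ t → t' ∈ O

/-- The border `∂O = {x_j · t : j, t ∈ O} \ O` of an order ideal, with the
convention `∂∅ = {1}`. -/
def border {n : ℕ} (O : Finset (Fin n →₀ ℕ)) : Set (Fin n →₀ ℕ) :=
  if O.Nonempty then
    {b | (∃ j : Fin n, ∃ t ∈ O, b = t + Finsupp.single j 1) ∧ b ∉ O}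
  else {0}

/-- The `K`-vector subspace of `K[X]` spanned by a set of monomials. -/
noncomputable def monSpan (K : Type*) [Field K] {n : ℕ} (O : Set (Fin n →₀ ℕ)) :
    Submodule K (MvPolynomial (Fin n) K) :=
  Submodule.span K ((fun m => (monomial m (1 : K))) '' O)

/-- The neighborhood extension `V⁺ = V + x_1·V + ⋯ + x_n·V` of a `K`-subspace
of `K[X]`. -/
noncomputable def nbExt {n : ℕ} {K : Type*} [Field K]
    (V : Submodule K (MvPolynomial (Fin n) K)) : Submodule K (MvPolynomial (Fin n) K) :=
  V ⊔ ⨆ j : Fin n, V.map (LinearMap.mulLeft K (X j : MvPolynomial (Fin n) K))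

/-!
Since `⟨L⟩ = Ĩ ⊕ ⟨O⟩` and `x_j·⟨O⟩ ⊆ ⟨L⟩` (this is where `∂O ⊆ L` enters), reducing `x_j·o`
modulo `Ĩ` defines multiplication maps `M_j` on `⟨O⟩`. The stability `Ĩ⁺ ∩ ⟨L⟩ = Ĩ` makes them
commute, since `M_i M_j o - M_j M_i o` lies in `Ĩ⁺ ∩ ⟨O⟩ ⊆ Ĩ ∩ ⟨O⟩ = 0`. Hence `Φ f = f(M)·1` is
well defined; by induction along the order ideal `L`, `f - Φ f ∈ Ĩ` for every `f ∈ ⟨L⟩`, so `Φ`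
is the identity on `⟨O⟩` and vanishes on `Ĩ`, hence on the ideal `I` it generates. This gives
`I ∩ ⟨O⟩ = 0`. Conversely `I + ⟨O⟩` contains `1` and is stable under every `x_j`, because
`x_j·⟨O⟩ ⊆ ⟨L⟩ = Ĩ + ⟨O⟩`, so it is all of `K[X]`.
-/

theorem Submodule.exists_linearMap_sub_mem_of_inf_eq_bot {R E : Type*} [Ring R] [AddCommGroup E]
    [Module R E] {p q : Submodule R E} (hpq : p ⊓ q = ⊥) :
    ∃ π : ↥(p ⊔ q) →ₗ[R] q, ∀ x : ↥(p ⊔ q), (x : E) - π x ∈ p := by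
  have hc : IsCompl (q.comap (p ⊔ q).subtype) (p.comap (p ⊔ q).subtype) := by
    refine ⟨Submodule.disjoint_def.2 fun x hq hp => Subtype.ext ?_, codisjoint_iff.2 ?_⟩
    · have hx : (x : E) ∈ p ⊓ q := ⟨hp, hq⟩
      rwa [hpq, Submodule.mem_bot] at hx
    · rw [← Submodule.comap_sup_of_injective (Submodule.subtype_injective _) (by simp) (by simp),
        sup_comm, Submodule.comap_subtype_self]
  exact ⟨(Submodule.comapSubtypeEquivOfLe le_sup_right).toLinearMap ∘ₗ
    Submodule.projectionOnto _ _ hc, Submodule.sub_projection_mem hc⟩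

theorem MvPolynomial.eq_top_of_one_mem_of_X_mul_mem {σ R : Type*} [CommSemiring R]
    {W : Submodule R (MvPolynomial σ R)} (h1 : 1 ∈ W) (hX : ∀ j, ∀ f ∈ W, X j * f ∈ W) :
    W = ⊤ := by
  suffices hmul : ∀ p, ∀ f ∈ W, p * f ∈ W from
    eq_top_iff.2 fun p _ => mul_one p ▸ hmul p 1 h1
  intro p
  induction p using MvPolynomial.induction_on with
  | C a => exact fun f hf => by rw [C_mul']; exact W.smul_mem a hf
  | add p q hp hq => exact fun f hf => add_mul p q f ▸ W.add_mem (hp f hf) (hq f hf)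
  | mul_X p j hp => exact fun f hf => (mul_assoc p (X j) f).symm ▸ hp _ (hX j f hf)

section AevalOfCommute

variable {σ R A : Type*} [CommSemiring R] [Semiring A] [Algebra R A]

open scoped IsMulCommutative in
noncomputable def aevalOfCommute (a : σ → A) (ha : ∀ i j, Commute (a i) (a j)) :
    MvPolynomial σ R →ₐ[R] A :=
  haveI := Algebra.isMulCommutative_adjoin R (s := Set.range a)
    (by rintro _ ⟨i, rfl⟩ _ ⟨j, rfl⟩; exact ha i j)
  (Algebra.adjoin R (Set.range a)).val.comp
    (aeval fun i => ⟨a i, Algebra.subset_adjoin ⟨i, rfl⟩⟩)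

@[simp]
theorem aevalOfCommute_X (a : σ → A) (ha : ∀ i j, Commute (a i) (a j)) (i : σ) :
    aevalOfCommute (R := R) a ha (X i) = a i := by
  simp [aevalOfCommute]

theorem aevalOfCommute_apply_eq_zero_of_mem_span {V : Type*} [AddCommMonoid V] [Module R V]
    {M : σ → Module.End R V} (hM : ∀ i j, Commute (M i) (M j)) {S : Set (MvPolynomial σ R)}
    {v : V} (hS : ∀ f ∈ S, aevalOfCommute M hM f v = 0) {f : MvPolynomial σ R}
    (hf : f ∈ Ideal.span S) : aevalOfCommute M hM f v = 0 := by
  induction hf using Submodule.span_induction with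
  | mem f hf => exact hS f hf
  | zero => simp
  | add f g _ _ hf hg => simp [hf, hg]
  | smul g f _ hf => simp [Module.End.mul_apply, hf]

end AevalOfCommute

section OrderIdeal

variable {n : ℕ}

theorem IsOrderIdeal.zero_mem {O : Finset (Fin n →₀ ℕ)} (hO : IsOrderIdeal O)
    (hne : O.Nonempty) : 0 ∈ O := by
  obtain ⟨t, ht⟩ := hne
  exact hO t ht 0 zero_le

theorem IsOrderIdeal.zero_mem_or_zero_mem_border {O : Finset (Fin n →₀ ℕ)}
    (hO : IsOrderIdeal O) : 0 ∈ O ∨ 0 ∈ border O := by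
  rcases O.eq_empty_or_nonempty with rfl | hne
  · simp [border]
  · exact Or.inl (hO.zero_mem hne)

theorem IsOrderIdeal.induction {L : Finset (Fin n →₀ ℕ)} (hL : IsOrderIdeal L)
    {P : (Fin n →₀ ℕ) → Prop} (zero : P 0)
    (step : ∀ t j, t + Finsupp.single j 1 ∈ L → P t → P (t + Finsupp.single j 1)) :
    ∀ t ∈ L, P t := by
  intro t
  induction t using WellFoundedLT.induction with
  | _ t ih =>
    intro ht
    rcases eq_or_ne t 0 with rfl | ht0
    · exact zero
    obtain ⟨j, hj⟩ : ∃ j, t j ≠ 0 := by simpa [Finsupp.ext_iff] using ht0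
    obtain ⟨s, rfl⟩ : ∃ s, t = s + Finsupp.single j 1 :=
      ⟨t - Finsupp.single j 1, (tsub_add_cancel_of_le (Finsupp.single_le_iff.2 (by omega))).symm⟩
    have hs : s < s + Finsupp.single j 1 :=
      lt_add_of_pos_right s (pos_iff_ne_zero.2 (Finsupp.single_ne_zero.2 one_ne_zero))
    exact step s j ht (ih s hs (hL _ ht s le_self_add))

end OrderIdeal

section MonomialSubspaces

variable {n : ℕ} {K : Type*} [Field K]

local notation "K[X]" => MvPolynomial (Fin n) K

theorem X_mul_monomial_one (j : Fin n) (t : Fin n →₀ ℕ) :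
    X j * monomial t (1 : K) = monomial (t + Finsupp.single j 1) 1 := by
  rw [monomial_add_single, pow_one, mul_comm]

theorem monomial_one_mem_monSpan {S : Set (Fin n →₀ ℕ)} {t : Fin n →₀ ℕ} (h : t ∈ S) :
    monomial t (1 : K) ∈ monSpan K S :=
  Submodule.subset_span ⟨t, h, rfl⟩

theorem one_mem_monSpan {S : Set (Fin n →₀ ℕ)} (h : 0 ∈ S) : (1 : K[X]) ∈ monSpan K S := by
  simpa using monomial_one_mem_monSpan (K := K) h

theorem X_mul_mem_monSpan_of_border_subset {O L : Finset (Fin n →₀ ℕ)}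
    (hborder : border O ⊆ L) (hOL : monSpan K (O : Set (Fin n →₀ ℕ)) ≤ monSpan K L) (j : Fin n)
    {f : K[X]} (hf : f ∈ monSpan K (O : Set (Fin n →₀ ℕ))) :
    X j * f ∈ monSpan K (L : Set (Fin n →₀ ℕ)) := by
  suffices monSpan K (O : Set (Fin n →₀ ℕ)) ≤ (monSpan K L).comap (LinearMap.mulLeft K (X j)) from
    this hf
  refine Submodule.span_le.2 ?_
  rintro _ ⟨t, ht, rfl⟩
  rw [SetLike.mem_coe, Submodule.mem_comap, LinearMap.mulLeft_apply, X_mul_monomial_one]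
  by_cases h : t + Finsupp.single j 1 ∈ O
  · exact hOL (monomial_one_mem_monSpan h)
  · refine monomial_one_mem_monSpan (hborder ?_)
    rw [border, if_pos ⟨t, ht⟩]
    exact ⟨⟨j, t, ht, rfl⟩, h⟩

theorem one_mem_monSpan_of_border_subset {O L : Finset (Fin n →₀ ℕ)} (hO : IsOrderIdeal O)
    (hborder : border O ⊆ L) (hOL : monSpan K (O : Set (Fin n →₀ ℕ)) ≤ monSpan K L) :
    (1 : K[X]) ∈ monSpan K (L : Set (Fin n →₀ ℕ)) := by
  rcases hO.zero_mem_or_zero_mem_border with h | h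
  · exact hOL (one_mem_monSpan (by exact_mod_cast h))
  · exact one_mem_monSpan (hborder h)

theorem le_nbExt (V : Submodule K K[X]) : V ≤ nbExt V :=
  le_sup_left

theorem X_mul_mem_nbExt {V : Submodule K K[X]} (j : Fin n) {f : K[X]} (hf : f ∈ V) :
    X j * f ∈ nbExt V :=
  le_sup_of_le_right (le_iSup (fun j => V.map (LinearMap.mulLeft K (X j))) j) ⟨f, hf, rfl⟩

variable {It VO VL : Submodule K (MvPolynomial (Fin n) K)}

variable (It) in
def IsMulMapsModulo (M : Fin n → Module.End K VO) : Prop :=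
  ∀ j (o : VO), X j * (o : K[X]) - (M j o : K[X]) ∈ It

theorem exists_isMulMapsModulo (hdisj : It ⊓ VO = ⊥) (hXO : ∀ j, ∀ f ∈ VO, X j * f ∈ It ⊔ VO) :
    ∃ M : Fin n → Module.End K VO, IsMulMapsModulo It M := by
  obtain ⟨π, hπ⟩ := Submodule.exists_linearMap_sub_mem_of_inf_eq_bot hdisj
  exact ⟨fun j => π ∘ₗ (LinearMap.mulLeft K (X j) ∘ₗ VO.subtype).codRestrict _ fun o => hXO j o o.2,
    fun j o => hπ _⟩

variable {M : Fin n → Module.End K VO}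

theorem IsMulMapsModulo.X_mul_X_mul_sub_mem_nbExt (hM : IsMulMapsModulo It M) (i j : Fin n)
    (o : VO) : X i * (X j * (o : K[X])) - (M i (M j o) : K[X]) ∈ nbExt It := by
  have e : X i * (X j * (o : K[X])) - (M i (M j o) : K[X]) =
      X i * (X j * (o : K[X]) - (M j o : K[X])) +
        (X i * (M j o : K[X]) - (M i (M j o) : K[X])) := by
    ring
  rw [e]
  exact add_mem (X_mul_mem_nbExt i (hM j o)) (le_nbExt It (hM i (M j o)))

theorem IsMulMapsModulo.commute (hM : IsMulMapsModulo It M) (hdisj : It ⊓ VO = ⊥)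
    (hOL : VO ≤ VL) (hstab : nbExt It ⊓ VL = It) (i j : Fin n) : Commute (M i) (M j) := by
  refine LinearMap.ext fun o => Subtype.ext (sub_eq_zero.1 ?_)
  set d : K[X] := (M i (M j o) : K[X]) - (M j (M i o) : K[X])
  have hd : d = (X j * (X i * (o : K[X])) - (M j (M i o) : K[X])) -
      (X i * (X j * (o : K[X])) - (M i (M j o) : K[X])) := by
    ring
  have hdO : d ∈ VO := sub_mem (M i (M j o)).2 (M j (M i o)).2
  have hdIt : d ∈ It := hstab ▸ ⟨hd ▸ sub_mem (hM.X_mul_X_mul_sub_mem_nbExt j i o)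
    (hM.X_mul_X_mul_sub_mem_nbExt i j o), hOL hdO⟩
  exact Submodule.disjoint_def.1 (disjoint_iff.2 hdisj) d hdIt hdO

theorem IsMulMapsModulo.sub_aevalOfCommute_mem (hM : IsMulMapsModulo It M)
    (hcomm : ∀ i j, Commute (M i) (M j)) {L : Finset (Fin n →₀ ℕ)} (hL : IsOrderIdeal L)
    (hOL : VO ≤ monSpan K L) (hstab : nbExt It ⊓ monSpan K L = It) (h1 : (1 : K[X]) ∈ VO)
    {f : K[X]} (hf : f ∈ monSpan K (L : Set (Fin n →₀ ℕ))) :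
    f - (aevalOfCommute M hcomm f ⟨1, h1⟩ : K[X]) ∈ It := by
  set Φ : K[X] →ₗ[K] K[X] :=
    VO.subtype ∘ₗ LinearMap.applyₗ ⟨1, h1⟩ ∘ₗ (aevalOfCommute M hcomm).toLinearMap
  suffices monSpan K (L : Set (Fin n →₀ ℕ)) ≤ It.comap (LinearMap.id - Φ) from this hf
  refine Submodule.span_le.2 ?_
  rintro _ ⟨t, ht, rfl⟩
  refine hL.induction (P := fun t => monomial t 1 - Φ (monomial t 1) ∈ It) ?_
    (fun t j htj ih => ?_) t ht
  · simp [Φ]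
  set o := aevalOfCommute M hcomm (monomial t (1 : K)) ⟨1, h1⟩
  have e : monomial (t + Finsupp.single j 1) 1 - Φ (monomial (t + Finsupp.single j 1) 1) =
      X j * (monomial t 1 - (o : K[X])) + (X j * (o : K[X]) - (M j o : K[X])) := by
    simp only [← X_mul_monomial_one, LinearMap.coe_comp, Submodule.coe_subtype,
      AlgHom.coe_toLinearMap, Function.comp_apply, map_mul, aevalOfCommute_X,
      LinearMap.applyₗ_apply_apply, Module.End.mul_apply, Φ, o]
    ring
  rw [← hstab]
  exact ⟨e ▸ add_mem (X_mul_mem_nbExt j ih) (le_nbExt It (hM j o)),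
    sub_mem (monomial_one_mem_monSpan htj) (hOL (Subtype.prop _))⟩

theorem IsMulMapsModulo.disjoint_span (hM : IsMulMapsModulo It M) {L : Finset (Fin n →₀ ℕ)}
    (hL : IsOrderIdeal L) (hdisj : It ⊓ VO = ⊥) (hsum : It ⊔ VO = monSpan K L)
    (hstab : nbExt It ⊓ monSpan K L = It) (h1 : (1 : K[X]) ∈ VO) :
    Disjoint ((Ideal.span (It : Set K[X])).restrictScalars K) VO := by
  have hOL : VO ≤ monSpan K L := hsum ▸ le_sup_right
  have hcomm := hM.commute hdisj hOL hstab
  set Φ : K[X] → VO := fun f => aevalOfCommute M hcomm f ⟨1, h1⟩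
  have hΦ : ∀ f ∈ monSpan K (L : Set (Fin n →₀ ℕ)), f - (Φ f : K[X]) ∈ It :=
    fun f hf => hM.sub_aevalOfCommute_mem hcomm hL hOL hstab h1 hf
  have hzero := Submodule.disjoint_def.1 (disjoint_iff.2 hdisj)
  have hΦ_VO : ∀ o ∈ VO, (Φ o : K[X]) = o := fun o ho =>
    (sub_eq_zero.1 (hzero _ (hΦ o (hOL ho)) (sub_mem ho (Φ o).2))).symm
  have hΦ_It : ∀ f ∈ It, Φ f = 0 := fun f hf => Subtype.ext <|
    hzero _ (by simpa using sub_mem hf (hΦ f (hsum ▸ Submodule.mem_sup_left hf))) (Φ f).2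
  refine Submodule.disjoint_def.2 fun f hfI hfO => ?_
  have hΦ_I : Φ f = 0 := aevalOfCommute_apply_eq_zero_of_mem_span hcomm hΦ_It hfI
  rw [← hΦ_VO f hfO, hΦ_I, ZeroMemClass.coe_zero]

theorem codisjoint_span_of_X_mul_mem (hsum : It ⊔ VO = VL) (h1 : (1 : K[X]) ∈ VL)
    (hXO : ∀ j, ∀ f ∈ VO, X j * f ∈ VL) :
    Codisjoint ((Ideal.span (It : Set K[X])).restrictScalars K) VO := by
  have hVL : VL ≤ (Ideal.span (It : Set K[X])).restrictScalars K ⊔ VO :=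
    hsum ▸ sup_le_sup_right (fun _ hf => Ideal.subset_span hf) VO
  refine codisjoint_iff.2 (eq_top_of_one_mem_of_X_mul_mem (hVL h1) fun j f hf => ?_)
  obtain ⟨a, ha, b, hb, rfl⟩ := Submodule.mem_sup.1 hf
  rw [mul_add]
  exact add_mem (Submodule.mem_sup_left (Ideal.mul_mem_left _ _ ha)) (hVL (hXO j b hb))

end MonomialSubspaces

theorem supports_borderBasis_of_stable_approx_general {n : ℕ} {K : Type*} [Field K]
    (L O : Finset (Fin n →₀ ℕ)) (hL : IsOrderIdeal L) (hO : IsOrderIdeal O)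
    (I : Ideal (MvPolynomial (Fin n) K))
    (It : Submodule K (MvPolynomial (Fin n) K))
    (hstab : nbExt It ⊓ monSpan K (L : Set (Fin n →₀ ℕ)) = It)
    (hgen : Ideal.span (It : Set (MvPolynomial (Fin n) K)) = I)
    (hdisj : It ⊓ monSpan K (O : Set (Fin n →₀ ℕ)) = ⊥)
    (hsum : It ⊔ monSpan K (O : Set (Fin n →₀ ℕ)) = monSpan K (L : Set (Fin n →₀ ℕ)))
    (hborder : border O ⊆ (L : Set (Fin n →₀ ℕ))) :
    IsCompl (Submodule.restrictScalars K I) (monSpan K (O : Set (Fin n →₀ ℕ))) := by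
  subst hgen
  have hOL : monSpan K (O : Set (Fin n →₀ ℕ)) ≤ monSpan K L := hsum ▸ le_sup_right
  have hXO : ∀ j, ∀ f ∈ monSpan K (O : Set (Fin n →₀ ℕ)), X j * f ∈ monSpan K L :=
    fun j _ hf => X_mul_mem_monSpan_of_border_subset hborder hOL j hf
  refine ⟨?_, codisjoint_span_of_X_mul_mem hsum
    (one_mem_monSpan_of_border_subset hO hborder hOL) hXO⟩
  rcases O.eq_empty_or_nonempty with rfl | hne
  · simp [monSpan]
  obtain ⟨M, hM⟩ := exists_isMulMapsModulo hdisj (hsum ▸ hXO)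
  exact hM.disjoint_span hL hdisj hsum hstab (one_mem_monSpan (by exact_mod_cast hO.zero_mem hne))

/-- let `Ĩ ⊆ ⟨L⟩_K` be an `L`-stabilized subspace generating the
zero-dimensional ideal `I`. If `O` is an order ideal with
`⟨L⟩_K = Ĩ ⊕ ⟨O⟩_K` and `∂O ⊆ L`, then `O` supports a border basis of `I`,
i.e. `K[X] = I ⊕ ⟨O⟩_K`. -/
theorem supports_borderBasis_of_stable_approx {n : ℕ} {K : Type*} [Field K]
    (L O : Finset (Fin n →₀ ℕ)) (hL : IsOrderIdeal L) (hO : IsOrderIdeal O)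
    (I : Ideal (MvPolynomial (Fin n) K))
    (hI : FiniteDimensional K (MvPolynomial (Fin n) K ⧸ I))
    (It : Submodule K (MvPolynomial (Fin n) K))
    (hItL : It ≤ monSpan K (L : Set (Fin n →₀ ℕ)))
    (hstab : nbExt It ⊓ monSpan K (L : Set (Fin n →₀ ℕ)) = It)
    (hgen : Ideal.span (It : Set (MvPolynomial (Fin n) K)) = I)
    (hdisj : It ⊓ monSpan K (O : Set (Fin n →₀ ℕ)) = ⊥)
    (hsum : It ⊔ monSpan K (O : Set (Fin n →₀ ℕ)) = monSpan K (L : Set (Fin n →₀ ℕ)))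
    (hborder : border O ⊆ (L : Set (Fin n →₀ ℕ))) :
    IsCompl (Submodule.restrictScalars K I) (monSpan K (O : Set (Fin n →₀ ℕ))) :=
  supports_borderBasis_of_stable_approx_general L O hL hO I It hstab hgen hdisj hsum hborder
end

section
/- Let K be a field, K[X] = K[x_1,…,x_n], I ⊆ K[X] a zero-dimensional ideal, and d = dim_K K[X]/I. Then I + ⟨T^n_{≤d−1}⟩_K = K[X]; that is, the monomials of total degree at most d−1 span K[X] modulo I. -/
open MvPolynomial

/-- Total degree of a monomial given by its exponent vector. -/
def mdeg {n : ℕ} (m : Fin n →₀ ℕ) : ℕ := m.sum fun _ k => k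

/-- The set `T^n_{≤e}` of monomials of total degree at most `e`. -/
def degLE (n e : ℕ) : Set (Fin n →₀ ℕ) := {m | mdeg m ≤ e}

section aux
variable {n : ℕ} {K : Type*} [Field K] (I : Ideal (MvPolynomial (Fin n) K))

lemma mdeg_add (a b : Fin n →₀ ℕ) : mdeg (a + b) = mdeg a + mdeg b :=
  Finsupp.sum_add_index' (fun _ => rfl) (fun _ _ _ => rfl)

/-- The quotient map as a `K`-linear map. -/
noncomputable def qmap : MvPolynomial (Fin n) K →ₗ[K] MvPolynomial (Fin n) K ⧸ I :=
  (Ideal.Quotient.mkₐ K I).toLinearMap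

/-- Image of the span of monomials of degree at most `e` in the quotient. -/
noncomputable def Vq (e : ℕ) : Submodule K (MvPolynomial (Fin n) K ⧸ I) :=
  (monSpan K (degLE n e)).map (qmap I)

lemma Vq_eq_span (e : ℕ) :
    Vq I e = Submodule.span K ((fun m => qmap I (monomial m 1)) '' degLE n e) := by
  rw [Vq, monSpan, Submodule.map_span, Set.image_image]

lemma Vq_mono : Monotone (Vq I) := fun a b h =>
  Submodule.map_mono (Submodule.span_mono (Set.image_mono fun m hm => le_trans hm h))

lemma mem_Vq {e : ℕ} {m : Fin n →₀ ℕ} (h : mdeg m ≤ e) :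
    qmap I (monomial m 1) ∈ Vq I e :=
  Submodule.mem_map_of_mem (Submodule.subset_span ⟨m, h, rfl⟩)

lemma qmap_mul (p q : MvPolynomial (Fin n) K) :
    qmap I (p * q) = qmap I p * qmap I q := by
  simp [qmap]

lemma Vq_step {e : ℕ} (h : Vq I e = Vq I (e + 1)) : Vq I (e + 1) = Vq I (e + 2) := by
  refine le_antisymm (Vq_mono I (by omega)) ?_
  rw [Vq_eq_span]
  refine Submodule.span_le.2 ?_
  rintro _ ⟨m, hm, rfl⟩
  by_cases hm1 : mdeg m ≤ e + 1
  · exact mem_Vq I hm1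
  have hm2 : mdeg m ≤ e + 2 := hm
  have hexists : ∃ i, m i ≠ 0 := by
    by_contra hc
    push_neg at hc
    have hm0 : m = 0 := Finsupp.ext fun i => hc i
    simp [hm0, mdeg] at hm1
  obtain ⟨i, hi⟩ := hexists
  set m' := m - Finsupp.single i 1 with hm'
  have hle : Finsupp.single i 1 ≤ m := Finsupp.single_le_iff.2 (by omega)
  have hsum : Finsupp.single i 1 + m' = m := by
    rw [hm', add_comm]; exact tsub_add_cancel_of_le hle
  have hsingle : mdeg (Finsupp.single i (1 : ℕ)) = 1 := by simp [mdeg]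
  have hmdeg : mdeg m = 1 + mdeg m' := by rw [← hsum, mdeg_add, hsingle]
  have hdeg' : mdeg m' ≤ e + 1 := by omega
  have hmem : qmap I (monomial m' 1) ∈ Vq I e := by
    rw [h]; exact mem_Vq I hdeg'
  have key : Vq I e ≤ Submodule.comap
      (LinearMap.mulLeft K (qmap I (X i))) (Vq I (e + 1)) := by
    rw [Vq_eq_span]
    refine Submodule.span_le.2 ?_
    rintro _ ⟨m'', hm'', rfl⟩
    rw [SetLike.mem_coe, Submodule.mem_comap, LinearMap.mulLeft_apply]
    have heq : qmap I (X i) * qmap I (monomial m'' 1)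
        = qmap I (monomial (Finsupp.single i 1 + m'') 1) := by
      rw [monomial_single_add, pow_one, qmap_mul]
    rw [heq]
    refine mem_Vq I ?_
    rw [mdeg_add, hsingle]
    have : mdeg m'' ≤ e := hm''
    omega
  have hfin : qmap I (monomial m 1) = qmap I (X i) * qmap I (monomial m' 1) := by
    rw [← hsum, monomial_single_add, pow_one, qmap_mul]
  show qmap I (monomial m 1) ∈ Vq I (e + 1)
  rw [hfin]
  exact key hmem

lemma Vq_stable {e : ℕ} (h : Vq I e = Vq I (e + 1)) : ∀ k, Vq I (e + k) = Vq I e := by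
  have hstep : ∀ k, Vq I (e + k) = Vq I (e + k + 1) := by
    intro k
    induction k with
    | zero => exact h
    | succ k ih => exact Vq_step I ih
  intro k
  induction k with
  | zero => rfl
  | succ k ih => exact ((hstep k).symm).trans ih

lemma iSup_Vq : ⨆ e, Vq I e = ⊤ := by
  have h1 : ⨆ e, monSpan K (degLE n e) = (⊤ : Submodule K (MvPolynomial (Fin n) K)) := by
    rw [eq_top_iff]
    intro p _
    have hp : p ∈ monSpan K (degLE n p.totalDegree) := by
      have key : ∀ v ∈ p.support, monomial v (coeff v p) ∈ monSpan K (degLE n p.totalDegree) := by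
        intro v hv
        have hm : monomial v (coeff v p) = (coeff v p) • monomial v (1 : K) := by
          rw [smul_monomial, smul_eq_mul, mul_one]
        rw [hm]
        exact Submodule.smul_mem _ _
          (Submodule.subset_span ⟨v, MvPolynomial.le_totalDegree hv, rfl⟩)
      have hsum := Submodule.sum_mem (monSpan K (degLE n p.totalDegree)) key
      rwa [← p.as_sum] at hsum
    exact Submodule.mem_iSup_of_mem p.totalDegree hp
  have hsurj : Function.Surjective (qmap I) := Ideal.Quotient.mkₐ_surjective K I
  calc ⨆ e, Vq I e = Submodule.map (qmap I) (⨆ e, monSpan K (degLE n e)) :=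
        (Submodule.map_iSup _ _).symm
    _ = ⊤ := by rw [h1, Submodule.map_top, LinearMap.range_eq_top.2 hsurj]

lemma Vq_top_of_eq {e : ℕ} (h : Vq I e = Vq I (e + 1)) : Vq I e = ⊤ := by
  rw [eq_top_iff, ← iSup_Vq I]
  refine iSup_le fun k => ?_
  rcases le_or_gt k e with hk | hk
  · exact Vq_mono I hk
  · have hst := Vq_stable I h (k - e)
    rw [show e + (k - e) = k by omega] at hst
    exact hst.le

lemma Vq_dichotomy [FiniteDimensional K (MvPolynomial (Fin n) K ⧸ I)] :
    ∀ e, Vq I e = ⊤ ∨ e + 1 ≤ Module.finrank K (Vq I e) := by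
  intro e
  induction e with
  | zero =>
    by_cases h : Vq I 0 = ⊤
    · exact .inl h
    right
    have h1 : (1 : MvPolynomial (Fin n) K ⧸ I) ∈ Vq I 0 := by
      have hm := mem_Vq I (m := (0 : Fin n →₀ ℕ)) (e := 0) (by simp [mdeg])
      simpa [qmap] using hm
    have hne : Vq I 0 ≠ ⊥ := by
      intro hb
      rw [hb, Submodule.mem_bot] at h1
      have : Subsingleton (MvPolynomial (Fin n) K ⧸ I) := subsingleton_of_zero_eq_one h1.symm
      exact h (Subsingleton.elim _ _)
    have : Module.finrank K (Vq I 0) ≠ 0 := fun hz => hne (Submodule.finrank_eq_zero.1 hz)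
    omega
  | succ e ih =>
    by_cases h : Vq I (e + 1) = ⊤
    · exact .inl h
    right
    rcases ih with he | he
    · exact absurd (eq_top_iff.2 (he ▸ Vq_mono I (Nat.le_succ e))) h
    have hlt : Vq I e < Vq I (e + 1) := by
      rcases (Vq_mono I (Nat.le_succ e)).lt_or_eq with h' | h'
      · exact h'
      · exact absurd (eq_top_iff.2 ((Vq_top_of_eq I h') ▸ Vq_mono I (Nat.le_succ e))) h
    have := Submodule.finrank_lt_finrank_of_lt hlt
    omega

end aux

/-- if `I` is zero-dimensional and `d = dim_K K[X]/I`, then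
`I + ⟨T^n_{≤d-1}⟩_K = K[X]`. -/
theorem ideal_sup_monSpan_degLE_eq_top {n : ℕ} {K : Type*} [Field K]
    (I : Ideal (MvPolynomial (Fin n) K))
    (hI : FiniteDimensional K (MvPolynomial (Fin n) K ⧸ I))
    (d : ℕ) (hd : d = Module.finrank K (MvPolynomial (Fin n) K ⧸ I)) :
    Submodule.restrictScalars K I ⊔ monSpan K (degLE n (d - 1)) = ⊤ := by
  by_cases htriv : Subsingleton (MvPolynomial (Fin n) K ⧸ I)
  · have h1 : (1 : MvPolynomial (Fin n) K) ∈ I := by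
      rw [← Ideal.Quotient.eq_zero_iff_mem]
      exact Subsingleton.elim _ _
    have hIt : I = ⊤ := (Ideal.eq_top_iff_one I).2 h1
    rw [eq_top_iff]
    intro x _
    exact Submodule.mem_sup_left (show x ∈ Submodule.restrictScalars K I by
      rw [hIt]; trivial)
  · have hnt : Nontrivial (MvPolynomial (Fin n) K ⧸ I) :=
      not_subsingleton_iff_nontrivial.1 htriv
    have hd1 : 1 ≤ d := by rw [hd]; exact Module.finrank_pos
    have htop : Vq I (d - 1) = ⊤ := by
      rcases Vq_dichotomy I (d - 1) with h | h
      · exact h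
      · refine Submodule.eq_top_of_finrank_eq ?_
        have hle := (Vq I (d - 1)).finrank_le
        omega
    set W := Submodule.restrictScalars K I ⊔ monSpan K (degLE n (d - 1)) with hW
    have hmap : Submodule.map (qmap I) W = ⊤ :=
      eq_top_iff.2 (htop ▸ Submodule.map_mono le_sup_right)
    have hker : LinearMap.ker (qmap I) ≤ W := by
      intro x hx
      have hxI : x ∈ I := by
        rw [LinearMap.mem_ker] at hx
        rwa [← Ideal.Quotient.eq_zero_iff_mem]
      exact Submodule.mem_sup_left (show x ∈ Submodule.restrictScalars K I from hxI)
    have hcm := Submodule.comap_map_eq (qmap I) W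
    rw [hmap, Submodule.comap_top] at hcm
    rw [sup_eq_left.2 hker] at hcm
    exact hcm.symm
end
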